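/- Let u, v : ℝ^d × ℝ → ℝ^d be smooth (C^∞) and suppose that at every (x,t) they satisfy the gradient-form stochastic-mechanics equations ∂_t v = −(1/m) ∇V + ½ ∇‖u‖² − ½ ∇‖v‖² + (ħ/(2m)) ∇⟨∇, u⟩ and ∂_t u = −∇⟨v, u⟩ − (ħ/(2m)) ∇⟨∇, v⟩. Suppose moreover there are smooth S₀ : ℝ^d → ℝ and smooth ρ₀ : ℝ^d → ℝ with ρ₀ > 0 such that v(x,0) = (ħ/m) ∇S₀(x) and u(x,0) = (ħ/(2m)) ∇ log ρ₀(x) for all x. Define S(x,t) := S₀(x) + ∫₀ᵗ ( ½ ⟨∇, u⟩(x,s) + (m/(2ħ)) ‖u(x,s)‖² − (m/(2ħ)) ‖v(x,s)‖² − (1/ħ) V(x,s) ) ds and ρ(x,t) := ρ₀(x) · exp( −∫₀ᵗ ( ⟨∇, v⟩(x,s) + (2m/ħ) ⟨u(x,s), v(x,s)⟩ ) ds ). Then ρ > 0 everywhere, v = (ħ/m) ∇S and u = (ħ/(2m)) ∇ log ρ at every (x,t), and the function ψ := √ρ · e^{iS} satisfies the Schrödinger equation iħ ∂_t ψ = −(ħ²/(2m))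 Δψ + V ψ at every (x,t) ∈ ℝ^d × ℝ, with ψ(x,0) = √(ρ₀(x)) e^{i S₀(x)}. -/

import Mathlib

noncomputable section

/-- Spatial partial derivative in the `j`-th coordinate direction. -/
def pdx {d : ℕ} {E : Type*} [NormedAddCommGroup E] [NormedSpace ℝ E]
    (j : Fin d) (f : (Fin d → ℝ) → E) (x : Fin d → ℝ) : E :=
  fderiv ℝ f x (Pi.single j 1)

/-- The wave function `ψ = √ρ · e^{iS}`. -/
def psi {d : ℕ} (ρ S : (Fin d → ℝ) → ℝ → ℝ) (x : Fin d → ℝ) (t : ℝ) : ℂ :=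
  (Real.sqrt (ρ x t) : ℂ) * Complex.exp (Complex.I * (S x t : ℂ))

/-- The time-dependent Schrödinger equation
`iℏ ∂ₜψ = −(ℏ²/(2m)) Δψ + V ψ` holding at every point `(x, t)`. -/
def SchrodingerEq {d : ℕ} (ℏ m : ℝ) (V : (Fin d → ℝ) → ℝ → ℝ)
    (ψ : (Fin d → ℝ) → ℝ → ℂ) : Prop :=
  ∀ (x : Fin d → ℝ) (t : ℝ),
    Complex.I * (ℏ : ℂ) * deriv (fun s => ψ x s) t
      = -((ℏ : ℂ) ^ 2 / (2 * (m : ℂ)))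
            * (∑ j : Fin d, pdx j (fun y => pdx j (fun z => ψ z t) y) x)
        + (V x t : ℂ) * ψ x t

/-- The phase `S(x,t) = S₀(x) + ∫₀ᵗ (½⟨∇,u⟩ + (m/(2ℏ))‖u‖² − (m/(2ℏ))‖v‖² − (1/ℏ)V) ds`
recovered by time integration from the velocities. -/
def phaseFromVel {d : ℕ} (ℏ m : ℝ) (V : (Fin d → ℝ) → ℝ → ℝ)
    (u v : (Fin d → ℝ) → ℝ → (Fin d → ℝ)) (S₀ : (Fin d → ℝ) → ℝ)
    (x : Fin d → ℝ) (t : ℝ) : ℝ :=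
  S₀ x + ∫ s in (0:ℝ)..t,
    ((1 / 2) * (∑ j : Fin d, pdx j (fun y => u y s j) x)
      + (m / (2 * ℏ)) * (∑ j : Fin d, (u x s j) ^ 2)
      - (m / (2 * ℏ)) * (∑ j : Fin d, (v x s j) ^ 2)
      - (1 / ℏ) * V x s)

/-- The density `ρ(x,t) = ρ₀(x) · exp(−∫₀ᵗ (⟨∇,v⟩ + (2m/ℏ)⟨u,v⟩) ds)`
recovered by time integration from the velocities. -/
def densityFromVel {d : ℕ} (ℏ m : ℝ)
    (u v : (Fin d → ℝ) → ℝ → (Fin d → ℝ)) (ρ₀ : (Fin d → ℝ) → ℝ)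
    (x : Fin d → ℝ) (t : ℝ) : ℝ :=
  ρ₀ x * Real.exp (-∫ s in (0:ℝ)..t,
    ((∑ j : Fin d, pdx j (fun y => v y s j) x)
      + (2 * m / ℏ) * (∑ j : Fin d, u x s j * v x s j)))


/-!
Differentiating the phase `S` under the integral sign and using the equation for `∂ₜ v` gives
`∂ᵢ ∂ₜ S = (m/ℏ) ∂ₜ vᵢ`, so by the fundamental theorem of calculus and the initial condition
`v(·,0) = (ℏ/m) ∇S₀` we get `v = (ℏ/m) ∇S` at all times; likewise the equation for `∂ₜ u` and
`u(·,0) = (ℏ/(2m)) ∇ log ρ₀` give `u = (ℏ/(2m)) ∇ log ρ`. Writing `ψ = exp (½ log ρ + i S)`,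
this means `∂ᵢ ψ = (m/ℏ) (uᵢ + i vᵢ) ψ`, while `∂ₜ ψ = (½ ∂ₜ log ρ + i ∂ₜ S) ψ`, and the
Schrödinger equation becomes an algebraic identity between the integrands and `u`, `v`.
-/

open Function intervalIntegral
open Complex (I)
open scoped ContDiff

variable {d : ℕ}

section PartialDerivative

variable {E : Type*} [NormedAddCommGroup E] [NormedSpace ℝ E]
  {f g : (Fin d → ℝ) → E} {x : Fin d → ℝ} {j : Fin d}

theorem HasFDerivAt.pdx_eq {L : (Fin d → ℝ) →L[ℝ] E} (h : HasFDerivAt f L x) :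
    pdx j f x = L (Pi.single j 1) := by
  rw [pdx, h.fderiv]

theorem pdx_add (hf : DifferentiableAt ℝ f x) (hg : DifferentiableAt ℝ g x) :
    pdx j (fun y => f y + g y) x = pdx j f x + pdx j g x :=
  (hf.hasFDerivAt.add hg.hasFDerivAt).pdx_eq

theorem pdx_sub (hf : DifferentiableAt ℝ f x) (hg : DifferentiableAt ℝ g x) :
    pdx j (fun y => f y - g y) x = pdx j f x - pdx j g x :=
  (hf.hasFDerivAt.sub hg.hasFDerivAt).pdx_eq

theorem pdx_neg : pdx j (fun y => -f y) x = -pdx j f x := by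
  simp [pdx]

theorem pdx_const_mul {𝔸 : Type*} [NormedRing 𝔸] [NormedAlgebra ℝ 𝔸] {f : (Fin d → ℝ) → 𝔸}
    (hf : DifferentiableAt ℝ f x) (c : 𝔸) :
    pdx j (fun y => c * f y) x = c * pdx j f x := by
  simp [pdx, fderiv_const_mul hf]

theorem pdx_mul {𝔸 : Type*} [NormedCommRing 𝔸] [NormedAlgebra ℝ 𝔸] {f g : (Fin d → ℝ) → 𝔸}
    (hf : DifferentiableAt ℝ f x) (hg : DifferentiableAt ℝ g x) :
    pdx j (fun y => f y * g y) x = pdx j f x * g x + f x * pdx j g x := by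
  simp [pdx, fderiv_fun_mul hf hg]
  ring

theorem pdx_ofReal {f : (Fin d → ℝ) → ℝ} (hf : DifferentiableAt ℝ f x) :
    pdx j (fun y => (f y : ℂ)) x = pdx j f x :=
  (Complex.ofRealCLM.hasFDerivAt.comp x hf.hasFDerivAt).pdx_eq

theorem pdx_cexp {f : (Fin d → ℝ) → ℂ} (hf : DifferentiableAt ℝ f x) :
    pdx j (fun y => Complex.exp (f y)) x = Complex.exp (f x) * pdx j f x :=
  hf.hasFDerivAt.cexp.pdx_eq

theorem contDiff_pdx {n : WithTop ℕ∞} (hf : ContDiff ℝ (n + 1) f) (j : Fin d) :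
    ContDiff ℝ n (pdx j f) :=
  (hf.fderiv_right le_rfl).clm_apply contDiff_const

end PartialDerivative

section Slices

variable {E G : Type*} [NormedAddCommGroup E] [NormedSpace ℝ E]
  [NormedAddCommGroup G] [NormedSpace ℝ G] {n : WithTop ℕ∞}

theorem ContDiff.uncurry_left {F : E → ℝ → G} (x : E) (hF : ContDiff ℝ n (uncurry F)) :
    ContDiff ℝ n (F x) :=
  hF.comp (contDiff_const.prodMk contDiff_id)

theorem ContDiff.uncurry_right {F : E → ℝ → G} (t : ℝ) (hF : ContDiff ℝ n (uncurry F)) :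
    ContDiff ℝ n fun y => F y t :=
  hF.comp (contDiff_id.prodMk contDiff_const)

theorem contDiff_slice_apply {w : (Fin d → ℝ) → ℝ → (Fin d → ℝ)}
    (hw : ContDiff ℝ n (uncurry w)) (s : ℝ) (j : Fin d) : ContDiff ℝ n fun y => w y s j :=
  ContDiff.uncurry_right (F := fun y s => w y s j) s (contDiff_pi.1 hw j)

theorem pdx_eq_fderiv_uncurry {F : (Fin d → ℝ) → ℝ → G} {x : Fin d → ℝ} {t : ℝ} (j : Fin d)
    (hF : DifferentiableAt ℝ (uncurry F) (x, t)) :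
    pdx j (fun y => F y t) x = fderiv ℝ (uncurry F) (x, t) (Pi.single j 1, 0) := by
  have h := HasFDerivAt.comp x hF.hasFDerivAt (hasFDerivAt_prodMk_left (𝕜 := ℝ) x t)
  exact (h.pdx_eq (j := j)).trans (by simp)

theorem ContDiff.uncurry_pdx {F : (Fin d → ℝ) → ℝ → G} (hF : ContDiff ℝ (n + 1) (uncurry F))
    (j : Fin d) : ContDiff ℝ n (uncurry fun x s => pdx j (fun y => F y s) x) := by
  have hF' : ContDiff ℝ n fun p => fderiv ℝ (uncurry F) p (Pi.single j 1, 0) :=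
    (hF.fderiv_right le_rfl).clm_apply contDiff_const
  convert hF' using 1
  exact funext fun p => pdx_eq_fderiv_uncurry j (hF.differentiable (by simp) p)

end Slices

section ParametricIntegral

variable {E G : Type*} [NormedAddCommGroup E] [NormedSpace ℝ E] [ProperSpace E]
  [NormedAddCommGroup G] [NormedSpace ℝ G] {F : E → ℝ → G}

theorem hasFDerivAt_intervalIntegral_of_contDiff (hF : ContDiff ℝ 1 (uncurry F))
    (a b : ℝ) (x : E) :
    HasFDerivAt (fun y => ∫ s in a..b, F y s)
      (∫ s in a..b, (fderiv ℝ (uncurry F) (x, s)).comp (ContinuousLinearMap.inl ℝ E ℝ)) x := by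
  set F' : E → ℝ → E →L[ℝ] G := fun y s =>
    (fderiv ℝ (uncurry F) (y, s)).comp (ContinuousLinearMap.inl ℝ E ℝ)
  have hF'_cont : Continuous (uncurry F') :=
    (hF.continuous_fderiv one_ne_zero).clm_comp continuous_const
  obtain ⟨C, hC⟩ := ((isCompact_closedBall x 1).prod isCompact_uIcc).exists_bound_of_continuousOn
    hF'_cont.continuousOn
  exact hasFDerivAt_integral_of_dominated_of_fderiv_le (bound := fun _ => C)
    (Metric.ball_mem_nhds x zero_lt_one)
    (Filter.Eventually.of_forall fun y => (hF.continuous.uncurry_left y).aestronglyMeasurable)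
    ((hF.continuous.uncurry_left x).intervalIntegrable a b)
    (hF'_cont.uncurry_left x).aestronglyMeasurable
    (Filter.Eventually.of_forall fun s hs y hy =>
      hC (y, s) ⟨Metric.ball_subset_closedBall hy, Set.uIoc_subset_uIcc hs⟩)
    intervalIntegrable_const
    (Filter.Eventually.of_forall fun s _ y _ => by
      have h := (hF.differentiable one_ne_zero (y, s)).hasFDerivAt.comp y
        (hasFDerivAt_prodMk_left (𝕜 := ℝ) y s)
      exact h)

theorem differentiable_intervalIntegral_of_contDiff (hF : ContDiff ℝ 1 (uncurry F)) (a b : ℝ) :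
    Differentiable ℝ fun y => ∫ s in a..b, F y s :=
  fun x => (hasFDerivAt_intervalIntegral_of_contDiff hF a b x).differentiableAt

theorem pdx_intervalIntegral {F : (Fin d → ℝ) → ℝ → G} (hF : ContDiff ℝ 1 (uncurry F))
    (a b : ℝ) (x : Fin d → ℝ) (j : Fin d) :
    pdx j (fun y => ∫ s in a..b, F y s) x = ∫ s in a..b, pdx j (fun y => F y s) x := by
  have h_cont : Continuous fun s => (fderiv ℝ (uncurry F) (x, s)).comp
      (ContinuousLinearMap.inl ℝ (Fin d → ℝ) ℝ) :=
    ((hF.continuous_fderiv one_ne_zero).comp (Continuous.prodMk_right x)).clm_comp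
      continuous_const
  rw [(hasFDerivAt_intervalIntegral_of_contDiff hF a b x).pdx_eq,
    ContinuousLinearMap.intervalIntegral_apply (h_cont.intervalIntegrable a b)]
  exact integral_congr fun s _ =>
    (pdx_eq_fderiv_uncurry j (hF.differentiable one_ne_zero (x, s))).symm

end ParametricIntegral

theorem pdx_add_intervalIntegral_eq_of_pdx_eq_deriv {G₀ : (Fin d → ℝ) → ℝ}
    {F w : (Fin d → ℝ) → ℝ → ℝ} {c : ℝ} {x : Fin d → ℝ} {j : Fin d}
    (hG₀ : DifferentiableAt ℝ G₀ x) (hF : ContDiff ℝ 1 (uncurry F))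
    (hw : ContDiff ℝ 1 (uncurry w)) (hFw : ∀ s, pdx j (fun y => F y s) x = c * deriv (w x) s)
    (h₀ : pdx j G₀ x = c * w x 0) (t : ℝ) :
    pdx j (fun y => G₀ y + ∫ s in (0 : ℝ)..t, F y s) x = c * w x t := by
  have hwx : ContDiff ℝ 1 (w x) := hw.uncurry_left x
  rw [pdx_add hG₀ (differentiable_intervalIntegral_of_contDiff hF 0 t x),
    pdx_intervalIntegral hF, integral_congr fun s _ => hFw s, integral_const_mul,
    integral_deriv_eq_sub (fun s _ => hwx.differentiable one_ne_zero s)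
      ((hwx.continuous_deriv le_rfl).intervalIntegrable _ _), h₀]
  ring

section WaveFunction

variable {ρ S : (Fin d → ℝ) → ℝ → ℝ} {x : Fin d → ℝ} {t : ℝ}

theorem psi_eq_cexp (hρ : 0 < ρ x t) :
    psi ρ S x t = Complex.exp (2⁻¹ * (Real.log (ρ x t) : ℂ) + I * S x t) := by
  have hsqrt : Real.sqrt (ρ x t) = Real.exp (2⁻¹ * Real.log (ρ x t)) := by
    rw [Real.sqrt_eq_rpow, Real.rpow_def_of_pos hρ, mul_comm]
    norm_num
  rw [psi, hsqrt, Complex.ofReal_exp, ← Complex.exp_add]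
  push_cast
  rfl

theorem hasDerivAt_psi {a b : ℝ} (hρ : ∀ s, 0 < ρ x s)
    (hlogρ : HasDerivAt (fun s => Real.log (ρ x s)) a t) (hS : HasDerivAt (fun s => S x s) b t) :
    HasDerivAt (fun s => psi ρ S x s) (psi ρ S x t * (2⁻¹ * a + I * b)) t := by
  simp_rw [psi_eq_cexp (hρ _)]
  exact ((hlogρ.ofReal_comp.const_mul _).add (hS.ofReal_comp.const_mul I)).cexp

theorem differentiableAt_psi (hρ : ∀ y, 0 < ρ y t)
    (hlogρ : DifferentiableAt ℝ (fun y => Real.log (ρ y t)) x)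
    (hS : DifferentiableAt ℝ (fun y => S y t) x) :
    DifferentiableAt ℝ (fun y => psi ρ S y t) x := by
  simp_rw [psi_eq_cexp (hρ _)]
  fun_prop

theorem pdx_psi (hρ : ∀ y, 0 < ρ y t)
    (hlogρ : DifferentiableAt ℝ (fun y => Real.log (ρ y t)) x)
    (hS : DifferentiableAt ℝ (fun y => S y t) x) (j : Fin d) :
    pdx j (fun y => psi ρ S y t) x
      = psi ρ S x t
          * (2⁻¹ * pdx j (fun y => Real.log (ρ y t)) x + I * pdx j (fun y => S y t) x) := by
  simp_rw [psi_eq_cexp (hρ _)]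
  rw [pdx_cexp (by fun_prop), pdx_add (by fun_prop) (by fun_prop), pdx_const_mul (by fun_prop),
    pdx_const_mul (by fun_prop), pdx_ofReal hlogρ, pdx_ofReal hS]

end WaveFunction

section StochasticMechanics

variable {ℏ m : ℝ} {V : (Fin d → ℝ) → ℝ → ℝ} {u v : (Fin d → ℝ) → ℝ → (Fin d → ℝ)}

def CurrentVelocityEq (ℏ m : ℝ) (V : (Fin d → ℝ) → ℝ → ℝ)
    (u v : (Fin d → ℝ) → ℝ → (Fin d → ℝ)) : Prop :=
  ∀ (x : Fin d → ℝ) (t : ℝ) (i : Fin d),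
    deriv (fun s => v x s i) t
      = -(1 / m) * pdx i (fun y => V y t) x
        + (1 / 2) * pdx i (fun y => ∑ j : Fin d, (u y t j) ^ 2) x
        - (1 / 2) * pdx i (fun y => ∑ j : Fin d, (v y t j) ^ 2) x
        + (ℏ / (2 * m)) * pdx i (fun y => ∑ j : Fin d, pdx j (fun z => u z t j) y) x

def OsmoticVelocityEq (ℏ m : ℝ) (u v : (Fin d → ℝ) → ℝ → (Fin d → ℝ)) : Prop :=
  ∀ (x : Fin d → ℝ) (t : ℝ) (i : Fin d),
    deriv (fun s => u x s i) t
      = -(pdx i (fun y => ∑ j : Fin d, v y t j * u y t j) x)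
        - (ℏ / (2 * m)) * pdx i (fun y => ∑ j : Fin d, pdx j (fun z => v z t j) y) x

def phaseRate (ℏ m : ℝ) (V : (Fin d → ℝ) → ℝ → ℝ) (u v : (Fin d → ℝ) → ℝ → (Fin d → ℝ))
    (x : Fin d → ℝ) (s : ℝ) : ℝ :=
  (1 / 2) * (∑ j : Fin d, pdx j (fun y => u y s j) x)
    + (m / (2 * ℏ)) * (∑ j : Fin d, (u x s j) ^ 2)
    - (m / (2 * ℏ)) * (∑ j : Fin d, (v x s j) ^ 2)
    - (1 / ℏ) * V x s

def logDensityRate (ℏ m : ℝ) (u v : (Fin d → ℝ) → ℝ → (Fin d → ℝ))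
    (x : Fin d → ℝ) (s : ℝ) : ℝ :=
  -((∑ j : Fin d, pdx j (fun y => v y s j) x)
    + (2 * m / ℏ) * (∑ j : Fin d, u x s j * v x s j))

theorem schrodingerEq_psi_of_madelung {ρ S : (Fin d → ℝ) → ℝ → ℝ} (hℏ : ℏ ≠ 0) (hm : m ≠ 0)
    (hu : ∀ s j, Differentiable ℝ fun y => u y s j) (hv : ∀ s j, Differentiable ℝ fun y => v y s j)
    (hρ : ∀ y s, 0 < ρ y s) (hlogρ : ∀ s, Differentiable ℝ fun y => Real.log (ρ y s))
    (hS : ∀ s, Differentiable ℝ fun y => S y s)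
    (hlogρ_grad : ∀ y s j, pdx j (fun z => Real.log (ρ z s)) y = (2 * m / ℏ) * u y s j)
    (hS_grad : ∀ y s j, pdx j (fun z => S z s) y = (m / ℏ) * v y s j)
    (hlogρ_t : ∀ y s, HasDerivAt (fun τ => Real.log (ρ y τ)) (logDensityRate ℏ m u v y s) s)
    (hS_t : ∀ y s, HasDerivAt (fun τ => S y τ) (phaseRate ℏ m V u v y s) s) :
    SchrodingerEq ℏ m V (psi ρ S) := by
  intro x t
  set κ : ℂ := (m : ℂ) / ℏ
  have hgrad : ∀ j y,
      pdx j (fun z => psi ρ S z t) y = psi ρ S y t * (κ * (u y t j + I * v y t j)) := by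
    intro j y
    rw [pdx_psi (hρ · t) (hlogρ t y) (hS t y), hlogρ_grad, hS_grad]
    push_cast
    ring
  have hlap : ∀ j, pdx j (fun y => pdx j (fun z => psi ρ S z t) y) x
      = psi ρ S x t * (κ ^ 2 * (u x t j + I * v x t j) ^ 2
          + κ * (pdx j (fun y => u y t j) x + I * pdx j (fun y => v y t j) x)) := by
    intro j
    simp_rw [hgrad j]
    have hψ := differentiableAt_psi (x := x) (hρ · t) (hlogρ t x) (hS t x)
    have hu' := hu t j
    have hv' := hv t j
    rw [pdx_mul hψ (by fun_prop), hgrad, pdx_const_mul (by fun_prop),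
      pdx_add (by fun_prop) (by fun_prop), pdx_const_mul (by fun_prop), pdx_ofReal (hu' x),
      pdx_ofReal (hv' x)]
    ring
  have hsum : ∑ j, (κ ^ 2 * (u x t j + I * v x t j) ^ 2
        + κ * (pdx j (fun y => u y t j) x + I * pdx j (fun y => v y t j) x))
      = κ ^ 2 * (∑ j, (u x t j : ℂ) ^ 2 - ∑ j, (v x t j : ℂ) ^ 2
          + 2 * I * ∑ j, (u x t j * v x t j : ℂ))
        + κ * (∑ j, ((pdx j (fun y => u y t j) x : ℝ) : ℂ)
          + I * ∑ j, ((pdx j (fun y => v y t j) x : ℝ) : ℂ)) := by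
    simp only [mul_add, mul_sub, Finset.mul_sum, ← Finset.sum_add_distrib,
      ← Finset.sum_sub_distrib]
    exact Finset.sum_congr rfl fun j _ => by
      linear_combination (κ ^ 2 * (v x t j : ℂ) ^ 2) * Complex.I_sq
  rw [(hasDerivAt_psi (hρ x) (hlogρ_t x t) (hS_t x t)).deriv,
    Finset.sum_congr rfl fun j _ => hlap j, ← Finset.mul_sum, hsum]
  simp only [logDensityRate, phaseRate, κ]
  push_cast
  have hℏ' : (ℏ : ℂ) ≠ 0 := by exact_mod_cast hℏ
  have hm' : (m : ℂ) ≠ 0 := by exact_mod_cast hm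
  field_simp
  ring_nf
  simp only [Complex.I_sq]
  ring

variable (hV : ContDiff ℝ ∞ (uncurry V)) (hu : ContDiff ℝ ∞ (uncurry u))
  (hv : ContDiff ℝ ∞ (uncurry v))
include hu hv

include hV in
theorem contDiff_phaseRate : ContDiff ℝ ∞ (uncurry (phaseRate ℏ m V u v)) := by
  have hdiv : ContDiff ℝ ∞ fun p : (Fin d → ℝ) × ℝ => ∑ j, pdx j (fun y => u y p.2 j) p.1 :=
    ContDiff.sum fun j _ =>
      ContDiff.uncurry_pdx (F := fun x s => u x s j) (n := ∞) (contDiff_pi.1 hu j) j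
  have hu' : ∀ j, ContDiff ℝ ∞ fun p : (Fin d → ℝ) × ℝ => u p.1 p.2 j := contDiff_pi.1 hu
  have hv' : ∀ j, ContDiff ℝ ∞ fun p : (Fin d → ℝ) × ℝ => v p.1 p.2 j := contDiff_pi.1 hv
  have hV' : ContDiff ℝ ∞ fun p : (Fin d → ℝ) × ℝ => V p.1 p.2 := hV
  unfold phaseRate uncurry
  fun_prop

theorem contDiff_logDensityRate : ContDiff ℝ ∞ (uncurry (logDensityRate ℏ m u v)) := by
  have hdiv : ContDiff ℝ ∞ fun p : (Fin d → ℝ) × ℝ => ∑ j, pdx j (fun y => v y p.2 j) p.1 :=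
    ContDiff.sum fun j _ =>
      ContDiff.uncurry_pdx (F := fun x s => v x s j) (n := ∞) (contDiff_pi.1 hv j) j
  have hu' : ∀ j, ContDiff ℝ ∞ fun p : (Fin d → ℝ) × ℝ => u p.1 p.2 j := contDiff_pi.1 hu
  have hv' : ∀ j, ContDiff ℝ ∞ fun p : (Fin d → ℝ) × ℝ => v p.1 p.2 j := contDiff_pi.1 hv
  unfold logDensityRate uncurry
  fun_prop

include hV in
theorem pdx_phaseRate (hℏ : ℏ ≠ 0) (hm : m ≠ 0) (heqv : CurrentVelocityEq ℏ m V u v)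
    (x : Fin d → ℝ) (s : ℝ) (i : Fin d) :
    pdx i (fun y => phaseRate ℏ m V u v y s) x = (m / ℏ) * deriv (fun τ => v x τ i) s := by
  have hu' : ∀ j, Differentiable ℝ fun y => u y s j := fun j =>
    (contDiff_slice_apply hu s j).differentiable (by simp)
  have hv' : ∀ j, Differentiable ℝ fun y => v y s j := fun j =>
    (contDiff_slice_apply hv s j).differentiable (by simp)
  have hdiv : ∀ j, Differentiable ℝ fun y => pdx j (fun z => u z s j) y := fun j =>
    (contDiff_pdx (n := ∞) (contDiff_slice_apply hu s j) j).differentiable (by simp)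
  have hV' : Differentiable ℝ fun y => V y s := (hV.uncurry_right s).differentiable (by simp)
  unfold phaseRate
  rw [pdx_sub (by fun_prop) (by fun_prop), pdx_sub (by fun_prop) (by fun_prop),
    pdx_add (by fun_prop) (by fun_prop), pdx_const_mul (by fun_prop), pdx_const_mul (by fun_prop),
    pdx_const_mul (by fun_prop), pdx_const_mul (by fun_prop), heqv]
  field_simp
  ring

theorem pdx_logDensityRate (hℏ : ℏ ≠ 0) (hm : m ≠ 0) (hequ : OsmoticVelocityEq ℏ m u v)
    (x : Fin d → ℝ) (s : ℝ) (i : Fin d) :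
    pdx i (fun y => logDensityRate ℏ m u v y s) x = (2 * m / ℏ) * deriv (fun τ => u x τ i) s := by
  have hu' : ∀ j, Differentiable ℝ fun y => u y s j := fun j =>
    (contDiff_slice_apply hu s j).differentiable (by simp)
  have hv' : ∀ j, Differentiable ℝ fun y => v y s j := fun j =>
    (contDiff_slice_apply hv s j).differentiable (by simp)
  have hdiv : ∀ j, Differentiable ℝ fun y => pdx j (fun z => v z s j) y := fun j =>
    (contDiff_pdx (n := ∞) (contDiff_slice_apply hv s j) j).differentiable (by simp)
  have huv : (fun y => ∑ j, u y s j * v y s j) = fun y => ∑ j, v y s j * u y s j :=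
    funext fun y => Finset.sum_congr rfl fun j _ => mul_comm _ _
  unfold logDensityRate
  rw [pdx_neg, pdx_add (by fun_prop) (by fun_prop), pdx_const_mul (by fun_prop), huv, hequ]
  field_simp
  ring

section Recovery

variable {S₀ ρ₀ : (Fin d → ℝ) → ℝ}

omit hu hv in
theorem densityFromVel_pos (hρ₀ : ∀ x, 0 < ρ₀ x) (x : Fin d → ℝ) (t : ℝ) :
    0 < densityFromVel ℏ m u v ρ₀ x t :=
  mul_pos (hρ₀ x) (Real.exp_pos _)

omit hu hv in
theorem log_densityFromVel (hρ₀ : ∀ x, 0 < ρ₀ x) (x : Fin d → ℝ) (t : ℝ) :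
    Real.log (densityFromVel ℏ m u v ρ₀ x t)
      = Real.log (ρ₀ x) + ∫ s in (0 : ℝ)..t, logDensityRate ℏ m u v x s := by
  rw [densityFromVel, Real.log_mul (hρ₀ x).ne' (Real.exp_ne_zero _), Real.log_exp,
    ← integral_neg]
  rfl

include hV in
theorem differentiable_phaseFromVel (hS₀ : Differentiable ℝ S₀) (t : ℝ) :
    Differentiable ℝ fun y => phaseFromVel ℏ m V u v S₀ y t :=
  hS₀.add (differentiable_intervalIntegral_of_contDiff
    ((contDiff_phaseRate hV hu hv).of_le (by simp)) 0 t)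

theorem differentiable_log_densityFromVel (hρ₀ : Differentiable ℝ ρ₀) (hρ₀_pos : ∀ x, 0 < ρ₀ x)
    (t : ℝ) : Differentiable ℝ fun y => Real.log (densityFromVel ℏ m u v ρ₀ y t) := by
  simp_rw [log_densityFromVel hρ₀_pos]
  exact (hρ₀.log fun x => (hρ₀_pos x).ne').add (differentiable_intervalIntegral_of_contDiff
    ((contDiff_logDensityRate hu hv).of_le (by simp)) 0 t)

include hV in
theorem hasDerivAt_phaseFromVel (x : Fin d → ℝ) (t : ℝ) :
    HasDerivAt (fun τ => phaseFromVel ℏ m V u v S₀ x τ) (phaseRate ℏ m V u v x t) t :=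
  ((((contDiff_phaseRate hV hu hv).uncurry_left x).continuous.integral_hasStrictDerivAt 0 t)
    ).hasDerivAt.const_add (S₀ x)

theorem hasDerivAt_log_densityFromVel (hρ₀_pos : ∀ x, 0 < ρ₀ x) (x : Fin d → ℝ) (t : ℝ) :
    HasDerivAt (fun τ => Real.log (densityFromVel ℏ m u v ρ₀ x τ))
      (logDensityRate ℏ m u v x t) t := by
  simp_rw [log_densityFromVel hρ₀_pos]
  exact ((((contDiff_logDensityRate hu hv).uncurry_left x).continuous.integral_hasStrictDerivAt
    0 t)).hasDerivAt.const_add _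

include hV in
theorem pdx_phaseFromVel (hℏ : ℏ ≠ 0) (hm : m ≠ 0) (heqv : CurrentVelocityEq ℏ m V u v)
    (hS₀ : Differentiable ℝ S₀) (hv₀ : ∀ x i, v x 0 i = (ℏ / m) * pdx i S₀ x)
    (x : Fin d → ℝ) (t : ℝ) (i : Fin d) :
    pdx i (fun y => phaseFromVel ℏ m V u v S₀ y t) x = (m / ℏ) * v x t i :=
  pdx_add_intervalIntegral_eq_of_pdx_eq_deriv (G₀ := S₀) (F := phaseRate ℏ m V u v)
    (w := fun x s => v x s i) (hS₀ x) ((contDiff_phaseRate hV hu hv).of_le (by simp))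
    ((contDiff_pi.1 hv i).of_le (by simp)) (pdx_phaseRate hV hu hv hℏ hm heqv x · i)
    (by rw [hv₀]; field_simp) t

theorem pdx_log_densityFromVel (hℏ : ℏ ≠ 0) (hm : m ≠ 0) (hequ : OsmoticVelocityEq ℏ m u v)
    (hρ₀ : Differentiable ℝ ρ₀) (hρ₀_pos : ∀ x, 0 < ρ₀ x)
    (hu₀ : ∀ x i, u x 0 i = (ℏ / (2 * m)) * pdx i (fun y => Real.log (ρ₀ y)) x)
    (x : Fin d → ℝ) (t : ℝ) (i : Fin d) :
    pdx i (fun y => Real.log (densityFromVel ℏ m u v ρ₀ y t)) x = (2 * m / ℏ) * u x t i := by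
  simp_rw [log_densityFromVel hρ₀_pos]
  exact pdx_add_intervalIntegral_eq_of_pdx_eq_deriv (w := fun x s => u x s i)
    ((hρ₀ x).log (hρ₀_pos x).ne') ((contDiff_logDensityRate hu hv).of_le (by simp))
    ((contDiff_pi.1 hu i).of_le (by simp)) (pdx_logDensityRate hu hv hℏ hm hequ x · i)
    (by rw [hu₀]; field_simp) t

end Recovery

end StochasticMechanics

theorem wave_function_recovery_from_velocities_general
    (d : ℕ) (ℏ m : ℝ) (hℏ : 0 < ℏ) (hm : 0 < m)
    (V : (Fin d → ℝ) → ℝ → ℝ) (hV : ContDiff ℝ (⊤ : ℕ∞) (Function.uncurry V))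
    (u v : (Fin d → ℝ) → ℝ → (Fin d → ℝ))
    (hu : ContDiff ℝ (⊤ : ℕ∞) (Function.uncurry u))
    (hv : ContDiff ℝ (⊤ : ℕ∞) (Function.uncurry v))
    (heqv : ∀ (x : Fin d → ℝ) (t : ℝ) (i : Fin d),
      deriv (fun s => v x s i) t
        = -(1 / m) * pdx i (fun y => V y t) x
          + (1 / 2) * pdx i (fun y => ∑ j : Fin d, (u y t j) ^ 2) x
          - (1 / 2) * pdx i (fun y => ∑ j : Fin d, (v y t j) ^ 2) x
          + (ℏ / (2 * m)) * pdx i (fun y => ∑ j : Fin d, pdx j (fun z => u z t j) y) x)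
    (hequ : ∀ (x : Fin d → ℝ) (t : ℝ) (i : Fin d),
      deriv (fun s => u x s i) t
        = -(pdx i (fun y => ∑ j : Fin d, v y t j * u y t j) x)
          - (ℏ / (2 * m)) * pdx i (fun y => ∑ j : Fin d, pdx j (fun z => v z t j) y) x)
    (S₀ ρ₀ : (Fin d → ℝ) → ℝ)
    (hS₀ : ContDiff ℝ (⊤ : ℕ∞) S₀) (hρ₀ : ContDiff ℝ (⊤ : ℕ∞) ρ₀)
    (hρ₀pos : ∀ x, 0 < ρ₀ x)
    (hv0 : ∀ (x : Fin d → ℝ) (i : Fin d), v x 0 i = (ℏ / m) * pdx i S₀ x)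
    (hu0 : ∀ (x : Fin d → ℝ) (i : Fin d),
      u x 0 i = (ℏ / (2 * m)) * pdx i (fun y => Real.log (ρ₀ y)) x) :
    (∀ (x : Fin d → ℝ) (t : ℝ), 0 < densityFromVel ℏ m u v ρ₀ x t)
    ∧ (∀ (x : Fin d → ℝ) (t : ℝ) (i : Fin d),
        v x t i = (ℏ / m) * pdx i (fun y => phaseFromVel ℏ m V u v S₀ y t) x)
    ∧ (∀ (x : Fin d → ℝ) (t : ℝ) (i : Fin d),
        u x t i
          = (ℏ / (2 * m))
              * pdx i (fun y => Real.log (densityFromVel ℏ m u v ρ₀ y t)) x)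
    ∧ SchrodingerEq ℏ m V (psi (densityFromVel ℏ m u v ρ₀) (phaseFromVel ℏ m V u v S₀))
    ∧ (∀ x : Fin d → ℝ,
        psi (densityFromVel ℏ m u v ρ₀) (phaseFromVel ℏ m V u v S₀) x 0
          = (Real.sqrt (ρ₀ x) : ℂ) * Complex.exp (Complex.I * (S₀ x : ℂ))) := by
  have hS₀' : Differentiable ℝ S₀ := hS₀.differentiable (by simp)
  have hρ₀' : Differentiable ℝ ρ₀ := hρ₀.differentiable (by simp)
  have hS_grad := pdx_phaseFromVel hV hu hv hℏ.ne' hm.ne' heqv hS₀' hv0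
  have hlogρ_grad := pdx_log_densityFromVel hu hv hℏ.ne' hm.ne' hequ hρ₀' hρ₀pos hu0
  refine ⟨densityFromVel_pos hρ₀pos, fun x t i => ?_, fun x t i => ?_, ?_, fun x => ?_⟩
  · rw [hS_grad]
    field_simp
  · rw [hlogρ_grad]
    field_simp
  · exact schrodingerEq_psi_of_madelung hℏ.ne' hm.ne'
      (fun s j => (contDiff_slice_apply hu s j).differentiable (by simp))
      (fun s j => (contDiff_slice_apply hv s j).differentiable (by simp))
      (densityFromVel_pos hρ₀pos) (differentiable_log_densityFromVel hu hv hρ₀' hρ₀pos)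
      (differentiable_phaseFromVel hV hu hv hS₀') hlogρ_grad hS_grad
      (hasDerivAt_log_densityFromVel hu hv hρ₀pos) (hasDerivAt_phaseFromVel hV hu hv)
  · simp [psi, phaseFromVel, densityFromVel]

/-- Smooth velocities `u, v` satisfying the gradient-form
stochastic-mechanics equations, with initial data `v(·,0) = (ℏ/m)∇S₀` and
`u(·,0) = (ℏ/(2m))∇ log ρ₀`, determine, by time integration of the phase and
log-density, a positive density `ρ` and a phase `S` with `v = (ℏ/m)∇S` and
`u = (ℏ/(2m))∇ log ρ`, such that `ψ = √ρ e^{iS}` satisfies the Schrödinger equation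
with initial value `ψ(x,0) = √(ρ₀(x)) e^{i S₀(x)}`. -/
theorem wave_function_recovery_from_velocities
    (d : ℕ) (hd : 1 ≤ d) (ℏ m : ℝ) (hℏ : 0 < ℏ) (hm : 0 < m)
    (V : (Fin d → ℝ) → ℝ → ℝ) (hV : ContDiff ℝ (⊤ : ℕ∞) (Function.uncurry V))
    (u v : (Fin d → ℝ) → ℝ → (Fin d → ℝ))
    (hu : ContDiff ℝ (⊤ : ℕ∞) (Function.uncurry u))
    (hv : ContDiff ℝ (⊤ : ℕ∞) (Function.uncurry v))
    (heqv : ∀ (x : Fin d → ℝ) (t : ℝ) (i : Fin d),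
      deriv (fun s => v x s i) t
        = -(1 / m) * pdx i (fun y => V y t) x
          + (1 / 2) * pdx i (fun y => ∑ j : Fin d, (u y t j) ^ 2) x
          - (1 / 2) * pdx i (fun y => ∑ j : Fin d, (v y t j) ^ 2) x
          + (ℏ / (2 * m)) * pdx i (fun y => ∑ j : Fin d, pdx j (fun z => u z t j) y) x)
    (hequ : ∀ (x : Fin d → ℝ) (t : ℝ) (i : Fin d),
      deriv (fun s => u x s i) t
        = -(pdx i (fun y => ∑ j : Fin d, v y t j * u y t j) x)
          - (ℏ / (2 * m)) * pdx i (fun y => ∑ j : Fin d, pdx j (fun z => v z t j) y) x)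
    (S₀ ρ₀ : (Fin d → ℝ) → ℝ)
    (hS₀ : ContDiff ℝ (⊤ : ℕ∞) S₀) (hρ₀ : ContDiff ℝ (⊤ : ℕ∞) ρ₀)
    (hρ₀pos : ∀ x, 0 < ρ₀ x)
    (hv0 : ∀ (x : Fin d → ℝ) (i : Fin d), v x 0 i = (ℏ / m) * pdx i S₀ x)
    (hu0 : ∀ (x : Fin d → ℝ) (i : Fin d),
      u x 0 i = (ℏ / (2 * m)) * pdx i (fun y => Real.log (ρ₀ y)) x) :
    (∀ (x : Fin d → ℝ) (t : ℝ), 0 < densityFromVel ℏ m u v ρ₀ x t)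
    ∧ (∀ (x : Fin d → ℝ) (t : ℝ) (i : Fin d),
        v x t i = (ℏ / m) * pdx i (fun y => phaseFromVel ℏ m V u v S₀ y t) x)
    ∧ (∀ (x : Fin d → ℝ) (t : ℝ) (i : Fin d),
        u x t i
          = (ℏ / (2 * m))
              * pdx i (fun y => Real.log (densityFromVel ℏ m u v ρ₀ y t)) x)
    ∧ SchrodingerEq ℏ m V (psi (densityFromVel ℏ m u v ρ₀) (phaseFromVel ℏ m V u v S₀))
    ∧ (∀ x : Fin d → ℝ,
        psi (densityFromVel ℏ m u v ρ₀) (phaseFromVel ℏ m V u v S₀) x 0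
          = (Real.sqrt (ρ₀ x) : ℂ) * Complex.exp (Complex.I * (S₀ x : ℂ))) :=
  wave_function_recovery_from_velocities_general d ℏ m hℏ hm V hV u v hu hv heqv hequ S₀ ρ₀ hS₀ hρ₀
    hρ₀pos hv0 hu0
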